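/- (KL barycentre) Let Q₁,...,Qₘ be probability measures equivalent to P with RN derivatives f_i, weights π_i ∈ (0,1) summing to 1, and 0 < E_P[∏ f_i^{π_i}] < ∞. Define Q^b by dQ^b/dP = ∏ f_i^{π_i} / E_P[∏ f_i^{π_i}]. Then Q^b is the unique minimizer, over probability measures Q ≪ P, of the weighted objective Σ_{i=1}^m π_i · D_KL(Q ‖ Q_i). -/

import Mathlib

/-!
Write `h_b = (∏ f_i ^ w_i) / Z`. Since `∑ w_i = 1`, the logarithms combine pointwise into
`∑ w_i · g log (g / f_i) = g log (g / h_b) - g log Z`, so for every density `g` the objective is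
`D_KL(g ‖ h_b) - log Z`. Gibbs' inequality, i.e. `h · klFun (g / h) ≥ 0` pointwise with equality
only where `g = h`, then shows that `D_KL(g ‖ h_b)` is nonnegative and vanishes only at `g = h_b`.
-/

open MeasureTheory Real Finset InformationTheory

lemma mul_klFun_div {x y : ℝ} (hy : y ≠ 0) :
    y * klFun (x / y) = x * log (x / y) + y - x := by
  rw [klFun_apply]
  field_simp

lemma sum_mul_mul_log_div_eq {ι : Type*} (s : Finset ι) (w y : ι → ℝ) (hws : ∑ i ∈ s, w i = 1)
    (hy : ∀ i ∈ s, 0 < y i) {Z : ℝ} (hZ : 0 < Z) (x : ℝ) :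
    ∑ i ∈ s, w i * (x * log (x / y i))
      = x * log (x / ((∏ i ∈ s, y i ^ w i) / Z)) - x * log Z := by
  rcases eq_or_ne x 0 with rfl | hx
  · simp
  have hprod : 0 < ∏ i ∈ s, y i ^ w i := prod_pos fun i hi => rpow_pos_of_pos (hy i hi) _
  have hlog_prod : log (∏ i ∈ s, y i ^ w i) = ∑ i ∈ s, w i * log (y i) := by
    rw [log_prod fun i hi => (rpow_pos_of_pos (hy i hi) _).ne']
    exact sum_congr rfl fun i hi => log_rpow (hy i hi) _
  have hterm : ∀ i ∈ s, w i * (x * log (x / y i)) = x * log x * w i - x * (w i * log (y i)) :=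
    fun i hi => by rw [log_div hx (hy i hi).ne']; ring
  rw [sum_congr rfl hterm, sum_sub_distrib, ← mul_sum, ← mul_sum, hws,
    log_div hx (div_pos hprod hZ).ne', log_div hprod.ne' hZ.ne', hlog_prod]
  ring

section Integrals

variable {Ω : Type*} [MeasurableSpace Ω] {μ : Measure Ω} {g h : Ω → ℝ}

lemma integral_mul_klFun_div (hg : Integrable g μ) (hh : Integrable h μ)
    (hh_pos : ∀ᵐ ω ∂μ, 0 < h ω) (hgh : ∫ ω, g ω ∂μ = ∫ ω, h ω ∂μ)
    (hint : Integrable (fun ω => g ω * log (g ω / h ω)) μ) :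
    ∫ ω, h ω * klFun (g ω / h ω) ∂μ = ∫ ω, g ω * log (g ω / h ω) ∂μ := by
  have hpt : (fun ω => h ω * klFun (g ω / h ω))
      =ᵐ[μ] fun ω => g ω * log (g ω / h ω) + h ω - g ω := by
    filter_upwards [hh_pos] with ω hω
    exact mul_klFun_div hω.ne'
  have hint_add : Integrable (fun ω => g ω * log (g ω / h ω) + h ω) μ := hint.add hh
  rw [integral_congr_ae hpt, integral_sub hint_add hg, integral_add hint hh, hgh]
  ring

lemma mul_klFun_div_nonneg_ae (hg_nonneg : ∀ᵐ ω ∂μ, 0 ≤ g ω) (hh_pos : ∀ᵐ ω ∂μ, 0 < h ω) :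
    ∀ᵐ ω ∂μ, 0 ≤ h ω * klFun (g ω / h ω) := by
  filter_upwards [hg_nonneg, hh_pos] with ω hgω hhω
  exact mul_nonneg hhω.le (klFun_nonneg (div_nonneg hgω hhω.le))

lemma integral_mul_log_div_nonneg (hg : Integrable g μ) (hh : Integrable h μ)
    (hg_nonneg : ∀ᵐ ω ∂μ, 0 ≤ g ω) (hh_pos : ∀ᵐ ω ∂μ, 0 < h ω)
    (hgh : ∫ ω, g ω ∂μ = ∫ ω, h ω ∂μ)
    (hint : Integrable (fun ω => g ω * log (g ω / h ω)) μ) :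
    0 ≤ ∫ ω, g ω * log (g ω / h ω) ∂μ := by
  rw [← integral_mul_klFun_div hg hh hh_pos hgh hint]
  exact integral_nonneg_of_ae (mul_klFun_div_nonneg_ae hg_nonneg hh_pos)

lemma ae_eq_of_integral_mul_log_div_eq_zero (hg : Integrable g μ) (hh : Integrable h μ)
    (hg_nonneg : ∀ᵐ ω ∂μ, 0 ≤ g ω) (hh_pos : ∀ᵐ ω ∂μ, 0 < h ω)
    (hgh : ∫ ω, g ω ∂μ = ∫ ω, h ω ∂μ)
    (hint : Integrable (fun ω => g ω * log (g ω / h ω)) μ)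
    (hzero : ∫ ω, g ω * log (g ω / h ω) ∂μ = 0) :
    g =ᵐ[μ] h := by
  have hkl_int : Integrable (fun ω => h ω * klFun (g ω / h ω)) μ := by
    refine ((hint.add hh).sub hg).congr ?_
    filter_upwards [hh_pos] with ω hω
    exact (mul_klFun_div hω.ne').symm
  have hkl_zero : (fun ω => h ω * klFun (g ω / h ω)) =ᵐ[μ] 0 := by
    rw [← integral_eq_zero_iff_of_nonneg_ae (mul_klFun_div_nonneg_ae hg_nonneg hh_pos) hkl_int,
      integral_mul_klFun_div hg hh hh_pos hgh hint, hzero]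
  filter_upwards [hkl_zero, hg_nonneg, hh_pos] with ω hω hgω hhω
  have hratio : g ω / h ω = 1 :=
    (klFun_eq_zero_iff (div_nonneg hgω hhω.le)).mp
      ((mul_eq_zero.mp hω).resolve_left hhω.ne')
  exact (div_eq_one_iff_eq hhω.ne').mp hratio

lemma integral_mul_log_div_self (hh_pos : ∀ᵐ ω ∂μ, 0 < h ω) :
    ∫ ω, h ω * log (h ω / h ω) ∂μ = 0 := by
  refine integral_eq_zero_of_ae ?_
  filter_upwards [hh_pos] with ω hω
  simp [div_self hω.ne']

lemma sum_mul_integral_mul_log_div_eq {m : ℕ} {f : Fin m → Ω → ℝ} {w : Fin m → ℝ}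
    (hws : ∑ i, w i = 1) (hf_pos : ∀ i, ∀ᵐ ω ∂μ, 0 < f i ω) {Z : ℝ} (hZ : 0 < Z)
    (hg : Integrable g μ) (hint : ∀ i, Integrable (fun ω => g ω * log (g ω / f i ω)) μ) :
    Integrable (fun ω => g ω * log (g ω / ((∏ i, f i ω ^ w i) / Z))) μ ∧
      ∑ i, w i * ∫ ω, g ω * log (g ω / f i ω) ∂μ
        = ∫ ω, g ω * log (g ω / ((∏ i, f i ω ^ w i) / Z)) ∂μ - (∫ ω, g ω ∂μ) * log Z := by
  have hpt : (fun ω => ∑ i, w i * (g ω * log (g ω / f i ω)))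
      =ᵐ[μ] fun ω => g ω * log (g ω / ((∏ i, f i ω ^ w i) / Z)) - g ω * log Z := by
    filter_upwards [ae_all_iff.2 hf_pos] with ω hω
    exact sum_mul_mul_log_div_eq univ w (f · ω) hws (fun i _ => hω i) hZ (g ω)
  have hsum_int : Integrable (fun ω => ∑ i, w i * (g ω * log (g ω / f i ω))) μ :=
    integrable_finsetSum _ fun i _ => (hint i).const_mul (w i)
  have hbar_int : Integrable (fun ω => g ω * log (g ω / ((∏ i, f i ω ^ w i) / Z))) μ := by
    refine (hsum_int.add (hg.mul_const (log Z))).congr ?_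
    filter_upwards [hpt] with ω hω
    rw [Pi.add_apply, hω]
    ring
  refine ⟨hbar_int, ?_⟩
  simp_rw [← integral_const_mul]
  rw [← integral_finsetSum _ fun i _ => (hint i).const_mul (w i), integral_congr_ae hpt,
    integral_sub hbar_int (hg.mul_const _), integral_mul_const]

end Integrals

theorem kl_barycentre_unique_minimizer_general
    {Ω : Type*} [MeasurableSpace Ω] (P : Measure Ω)
    (m : ℕ) (f : Fin m → Ω → ℝ) (w : Fin m → ℝ)
    (hws : ∑ i, w i = 1)
    (hfpos : ∀ i, ∀ᵐ ω ∂P, 0 < f i ω)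
    (hprodint : Integrable (fun ω => ∏ i, f i ω ^ w i) P)
    (Z : ℝ) (hZ : Z = ∫ ω, ∏ i, f i ω ^ w i ∂P) (hZpos : 0 < Z)
    (hb : Ω → ℝ) (hhb : hb = fun ω => (∏ i, f i ω ^ w i) / Z)
    (hKLbi : ∀ i, Integrable (fun ω => hb ω * Real.log (hb ω / f i ω)) P) :
    ∀ g : Ω → ℝ, Measurable g → (∀ᵐ ω ∂P, 0 ≤ g ω) → (∫ ω, g ω ∂P = 1) →
      (∀ i, Integrable (fun ω => g ω * Real.log (g ω / f i ω)) P) →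
      (∑ i, w i * ∫ ω, hb ω * Real.log (hb ω / f i ω) ∂P)
          ≤ ∑ i, w i * ∫ ω, g ω * Real.log (g ω / f i ω) ∂P ∧
      ((∑ i, w i * ∫ ω, g ω * Real.log (g ω / f i ω) ∂P)
          = ∑ i, w i * ∫ ω, hb ω * Real.log (hb ω / f i ω) ∂P → g =ᵐ[P] hb) := by
  intro g _ hg_nonneg hg_one hg_kl
  have hb_pos : ∀ᵐ ω ∂P, 0 < hb ω := by
    filter_upwards [ae_all_iff.2 hfpos] with ω hω
    rw [hhb]
    exact div_pos (prod_pos fun i _ => rpow_pos_of_pos (hω i) _) hZpos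
  have hb_int : Integrable hb P := hhb ▸ hprodint.div_const Z
  have hb_one : ∫ ω, hb ω ∂P = 1 := by
    rw [hhb, integral_div, ← hZ, div_self hZpos.ne']
  have hg_int : Integrable g P := .of_integral_ne_zero (by rw [hg_one]; exact one_ne_zero)
  have hgh : ∫ ω, g ω ∂P = ∫ ω, hb ω ∂P := hg_one.trans hb_one.symm
  obtain ⟨hg_bar_int, hg_sum⟩ := sum_mul_integral_mul_log_div_eq hws hfpos hZpos hg_int hg_kl
  obtain ⟨-, hb_sum⟩ := sum_mul_integral_mul_log_div_eq hws hfpos hZpos hb_int hKLbi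
  have hb_apply : ∀ ω, (∏ i, f i ω ^ w i) / Z = hb ω := fun ω => by rw [hhb]
  simp only [hb_apply] at hg_bar_int hg_sum hb_sum
  rw [integral_mul_log_div_self hb_pos, hb_one] at hb_sum
  rw [hg_sum, hb_sum, hg_one]
  refine ⟨?_, fun heq => ?_⟩
  · linarith [integral_mul_log_div_nonneg hg_int hb_int hg_nonneg hb_pos hgh hg_bar_int]
  · exact ae_eq_of_integral_mul_log_div_eq_zero hg_int hb_int hg_nonneg hb_pos hgh hg_bar_int
      (by linarith)

/-- KL barycentre: the measure with `P`-density `h_b = (∏ f i ^ w i)/Z` is the unique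
minimizer of `Q ↦ Σ w i · D_KL(Q ‖ Q_i)` over probability measures `Q ≪ P` (represented by
their `P`-densities `g`). -/
theorem kl_barycentre_unique_minimizer
    {Ω : Type*} [MeasurableSpace Ω] (P : Measure Ω) [IsProbabilityMeasure P]
    (m : ℕ) (f : Fin m → Ω → ℝ) (w : Fin m → ℝ)
    (hw : ∀ i, w i ∈ Set.Ioo (0:ℝ) 1) (hws : ∑ i, w i = 1)
    (hfmeas : ∀ i, Measurable (f i))
    (hfpos : ∀ i, ∀ᵐ ω ∂P, 0 < f i ω)
    (hfint : ∀ i, Integrable (f i) P) (hfone : ∀ i, ∫ ω, f i ω ∂P = 1)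
    (hprodint : Integrable (fun ω => ∏ i, f i ω ^ w i) P)
    (Z : ℝ) (hZ : Z = ∫ ω, ∏ i, f i ω ^ w i ∂P) (hZpos : 0 < Z)
    (hb : Ω → ℝ) (hhb : hb = fun ω => (∏ i, f i ω ^ w i) / Z)
    (hKLbi : ∀ i, Integrable (fun ω => hb ω * Real.log (hb ω / f i ω)) P) :
    ∀ g : Ω → ℝ, Measurable g → (∀ᵐ ω ∂P, 0 ≤ g ω) → (∫ ω, g ω ∂P = 1) →
      (∀ i, Integrable (fun ω => g ω * Real.log (g ω / f i ω)) P) →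
      (∑ i, w i * ∫ ω, hb ω * Real.log (hb ω / f i ω) ∂P)
          ≤ ∑ i, w i * ∫ ω, g ω * Real.log (g ω / f i ω) ∂P ∧
      ((∑ i, w i * ∫ ω, g ω * Real.log (g ω / f i ω) ∂P)
          = ∑ i, w i * ∫ ω, hb ω * Real.log (hb ω / f i ω) ∂P → g =ᵐ[P] hb) :=
  kl_barycentre_unique_minimizer_general P m f w hws hfpos hprodint Z hZ hZpos hb hhb hKLbi
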